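/- Let L be a subdirectly irreducible pk-algebra satisfying a* ≤ C(b) ∨ T(a)* for all a, b ∈ L, and let d be its least dense element. Then the underlying lattice of L is an ordinal sum B ⊕ C_i ⊕ B of a Boolean lattice, a chain with at most three elements, and a Boolean lattice; precisely: (i) every a ∈ L with a ≤ d has a complement in [0, d], i.e. there is b ≤ d with a ∧ b = 0 and a ∨ b = d; (ii) the map a ↦ a' is an order-reversing bijection from [0, d] onto [d', 1]; (iii) the interval [d, d'] is a chain with at most three elements; (iv) every a ∈ L satisfies a ≤ d, or d ≤ a ≤ d', or d' ≤ a. -/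

import Mathlib

/-- A pseudocomplemented De Morgan algebra (pm-algebra): a bounded distributive
lattice with a De Morgan involution `dm` and a pseudocomplement `pc`. -/
class PMAlgebra (L : Type*) extends DistribLattice L, BoundedOrder L where
  dm : L → L
  pc : L → L
  dm_dm : ∀ a : L, dm (dm a) = a
  dm_inf : ∀ a b : L, dm (a ⊓ b) = dm a ⊔ dm b
  pc_iff : ∀ a b : L, a ⊓ b = ⊥ ↔ b ≤ pc a

namespace PMAlgebra

variable {L : Type*} [PMAlgebra L]

/-- A congruence of a pm-algebra. -/
def IsCongruence (θ : L → L → Prop) : Prop :=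
  Equivalence θ ∧
  (∀ a b c d : L, θ a b → θ c d → θ (a ⊓ c) (b ⊓ d)) ∧
  (∀ a b c d : L, θ a b → θ c d → θ (a ⊔ c) (b ⊔ d)) ∧
  (∀ a b : L, θ a b → θ (dm a) (dm b)) ∧
  (∀ a b : L, θ a b → θ (pc a) (pc b))

/-- `L` is simple: it has more than one element and its only congruences are
equality and the total relation. -/
def Simple (L : Type*) [PMAlgebra L] : Prop :=
  Nontrivial L ∧ ∀ θ : L → L → Prop, IsCongruence θ →
    θ = (fun a b => a = b) ∨ θ = (fun _ _ => True)

/-- `L` is subdirectly irreducible: there is a congruence `μ ≠ Eq` contained in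
every congruence different from equality. -/
def SubdirectlyIrreducible (L : Type*) [PMAlgebra L] : Prop :=
  ∃ μ : L → L → Prop, IsCongruence μ ∧ μ ≠ (fun a b => a = b) ∧
    ∀ θ : L → L → Prop, IsCongruence θ → θ ≠ (fun a b => a = b) →
      ∀ a b : L, μ a b → θ a b

/-- A prime filter of the underlying lattice of `L`. -/
def IsPrimeFilter (P : Set L) : Prop :=
  P.Nonempty ∧ P ≠ Set.univ ∧
  (∀ a b : L, a ∈ P → a ≤ b → b ∈ P) ∧
  (∀ a b : L, a ∈ P → b ∈ P → a ⊓ b ∈ P) ∧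
  (∀ a b : L, a ⊔ b ∈ P → a ∈ P ∨ b ∈ P)

/-- The Birula–Rasiowa transformation. -/
def phi (P : Set L) : Set L := {a : L | dm a ∉ P}

/-- `P` is a maximal prime filter. -/
def IsMaximalPF (P : Set L) : Prop :=
  IsPrimeFilter P ∧ ∀ Q : Set L, IsPrimeFilter Q → P ⊆ Q → Q = P

/-- `P` is a minimal prime filter. -/
def IsMinimalPF (P : Set L) : Prop :=
  IsPrimeFilter P ∧ ∀ Q : Set L, IsPrimeFilter Q → Q ⊆ P → Q = P

/-- The body of `L`: prime filters that are neither maximal nor minimal. -/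
def body (L : Type*) [PMAlgebra L] : Set (Set L) :=
  {P : Set L | IsPrimeFilter P ∧ ¬ IsMaximalPF P ∧ ¬ IsMinimalPF P}

/-- The prime filter space of `L` is φ-connected. -/
def PhiConnected (L : Type*) [PMAlgebra L] : Prop :=
  ∀ S : Set (Set L), S ⊆ {P : Set L | IsPrimeFilter P} → S.Nonempty →
    (∀ P Q : Set L, P ∈ S → IsPrimeFilter Q → P ⊆ Q → Q ∈ S) →
    (∀ P Q : Set L, P ∈ S → IsPrimeFilter Q → Q ⊆ P → Q ∈ S) →
    (∀ P : Set L, P ∈ S → phi P ∈ S) →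
    S = {P : Set L | IsPrimeFilter P}

/-- The Kleene identity. -/
def Kleene (L : Type*) [PMAlgebra L] : Prop :=
  ∀ a b : L, a ⊓ dm a ≤ b ⊔ dm b

/-- The term `C(x) = (x ∧ x') ∨ (x ∧ x')*`. -/
def C (x : L) : L := (x ⊓ dm x) ⊔ pc (x ⊓ dm x)

/-- The term `T(x) = C(x) ∧ C(x)'`. -/
def T (x : L) : L := C x ⊓ dm (C x)

end PMAlgebra

open PMAlgebra

/-!
Congruences are built as kernels of lattice maps that respect `'` and `*`: `a ↦ a ∧ c` when
`c ∧ c' = 0`, and `a ↦ (a ∧ f, a ∨ f')` when `f` is dense. A subdirectly irreducible algebra has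
no two nontrivial congruences meeting in the identity. Hence every `c` with `c ∧ c' = 0` is `0`
or `1`, and every `x ∈ [d, d']` is `d`, `d'` or a fixed point of `'`, of which a Kleene algebra
has at most one.

The identity enters through `T(w)* = 0` for `0 ≠ w ≤ w'`: taking `b = w*` in it shows that
`r = T(w)*` satisfies `r ∧ r' = 0`, and `r = 1` would force `w = 0`. Applied to `w = d ∧ d'`
this gives `d ≤ d'` (unless `d = 1`), and applied to `0 ≠ w ≤ d` it gives `w* ≤ C(d) = d`, so
every non-dense element lies below `d`. Dually every `a` with `a'` not dense lies above `d'`, and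
the remaining `a` lie in `[d, d']`.
-/

theorem eq_of_inf_eq_of_sup_eq_of_sup_inf_eq {α : Type*} [DistribLattice α] {a b x y : α}
    (hxy : x ≤ y) (h₁ : a ⊓ x = b ⊓ x) (h₂ : a ⊔ y = b ⊔ y) (h₃ : (a ⊔ x) ⊓ y = (b ⊔ x) ⊓ y) :
    a = b := by
  have key : ∀ c : α, c ⊓ y ⊔ x = (c ⊔ x) ⊓ y := fun c => by
    rw [sup_inf_right, sup_eq_left.2 hxy]
  refine eq_of_inf_eq_sup_eq (eq_of_inf_eq_sup_eq (a := x) ?_ ?_) h₂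
  · rw [inf_assoc, inf_eq_right.2 hxy, inf_assoc, inf_eq_right.2 hxy, h₁]
  · rw [key, key, h₃]

namespace PMAlgebra

variable {L : Type*} [PMAlgebra L] {a b c d f p w x : L}

theorem dm_le_dm (h : a ≤ b) : dm b ≤ dm a := by
  rw [← sup_eq_left, ← dm_inf, inf_eq_left.2 h]

theorem dm_sup (a b : L) : dm (a ⊔ b) = dm a ⊓ dm b := by
  rw [← dm_dm (dm a ⊓ dm b), dm_inf, dm_dm, dm_dm]

theorem dm_bot : dm (⊥ : L) = ⊤ :=
  top_unique (by simpa only [dm_dm] using dm_le_dm (bot_le : ⊥ ≤ dm (⊤ : L)))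

theorem le_dm_comm : a ≤ dm b ↔ b ≤ dm a :=
  ⟨fun h => dm_dm b ▸ dm_le_dm h, fun h => dm_dm a ▸ dm_le_dm h⟩

theorem dm_le_comm : dm a ≤ b ↔ dm b ≤ a :=
  ⟨fun h => dm_dm a ▸ dm_le_dm h, fun h => dm_dm b ▸ dm_le_dm h⟩

theorem dm_le_dm_iff : dm a ≤ dm b ↔ b ≤ a := by
  rw [le_dm_comm, dm_dm]

theorem bijOn_dm_Iic_Ici (d : L) : Set.BijOn dm (Set.Iic d) (Set.Ici (dm d)) :=
  Set.InvOn.bijOn ⟨fun a _ => dm_dm a, fun a _ => dm_dm a⟩ (fun _ => dm_le_dm)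
    (fun _ => dm_le_comm.1)

theorem inf_pc_eq_bot (a : L) : a ⊓ pc a = ⊥ :=
  (pc_iff a (pc a)).2 le_rfl

theorem pc_le_pc (h : a ≤ b) : pc b ≤ pc a :=
  (pc_iff a (pc b)).1 (le_bot_iff.1 ((inf_le_inf_right _ h).trans (inf_pc_eq_bot b).le))

theorem le_pc_pc (a : L) : a ≤ pc (pc a) :=
  (pc_iff (pc a) a).1 (by rw [inf_comm, inf_pc_eq_bot])

theorem pc_sup (a b : L) : pc (a ⊔ b) = pc a ⊓ pc b := by
  refine le_antisymm (le_inf (pc_le_pc le_sup_left) (pc_le_pc le_sup_right)) ((pc_iff _ _).1 ?_)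
  rw [inf_sup_right, ← inf_assoc, inf_pc_eq_bot, bot_inf_eq, inf_left_comm, inf_pc_eq_bot,
    inf_bot_eq, sup_bot_eq]

theorem pc_sup_pc_eq_bot (a : L) : pc (a ⊔ pc a) = ⊥ := by
  rw [pc_sup, inf_pc_eq_bot]

theorem pc_inf_eq_pc_inf_inf (a c : L) : pc a ⊓ c = pc (a ⊓ c) ⊓ c := by
  refine le_antisymm (inf_le_inf_right c (pc_le_pc inf_le_left))
    (le_inf ((pc_iff a _).1 ?_) inf_le_right)
  rw [← inf_assoc, inf_right_comm, inf_pc_eq_bot]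

theorem eq_bot_of_pc_eq_top (h : pc a = ⊤) : a = ⊥ := by
  simpa only [h, inf_top_eq] using inf_pc_eq_bot a

theorem pc_eq_bot_of_le (hf : pc f = ⊥) (h : f ≤ a) : pc a = ⊥ :=
  le_bot_iff.1 (hf ▸ pc_le_pc h)

theorem eq_bot_of_inf_eq_bot_of_pc_eq_bot (hf : pc f = ⊥) (h : a ⊓ f = ⊥) : a = ⊥ :=
  le_bot_iff.1 (hf ▸ (pc_iff f a).1 (by rwa [inf_comm]))

theorem pc_eq_pc_of_inf_eq (hf : pc f = ⊥) (h : a ⊓ f = b ⊓ f) : pc a = pc b := by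
  have key : ∀ {p q : L}, p ⊓ f = q ⊓ f → pc p ≤ pc q := fun {p q} e =>
    (pc_iff q (pc p)).1 <| eq_bot_of_inf_eq_bot_of_pc_eq_bot hf <| by
      rw [inf_comm q, inf_assoc, ← e, ← inf_assoc, inf_comm (pc p), inf_pc_eq_bot, bot_inf_eq]
  exact le_antisymm (key h) (key h.symm)

theorem pc_inf_of_pc_eq_bot (hf : pc f = ⊥) (a : L) : pc (a ⊓ f) = pc a :=
  pc_eq_pc_of_inf_eq hf (by rw [inf_assoc, inf_idem])

theorem exists_inf_eq_bot_sup_eq_of_le (hd : d ∈ lowerBounds {e : L | pc e = ⊥}) (ha : a ≤ d) :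
    ∃ b ≤ d, a ⊓ b = ⊥ ∧ a ⊔ b = d :=
  ⟨pc a ⊓ d, inf_le_right, by rw [← inf_assoc, inf_pc_eq_bot, bot_inf_eq],
    by rw [sup_inf_left, sup_eq_right.2 ha, inf_eq_right.2 (hd (pc_sup_pc_eq_bot a))]⟩

namespace Kleene

variable (hk : Kleene L)
include hk

theorem le_dm_of_inf_eq_bot (h : a ⊓ b = ⊥) : a ≤ dm b := by
  have hkab : a ⊓ dm a ≤ a ⊓ dm b :=
    calc a ⊓ dm a ≤ a ⊓ (b ⊔ dm b) := le_inf inf_le_left (hk a b)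
      _ = a ⊓ dm b := by rw [inf_sup_left, h, bot_sup_eq]
  calc a = a ⊓ (dm a ⊔ dm b) := by rw [← dm_inf, h, dm_bot, inf_top_eq]
    _ = a ⊓ dm a ⊔ a ⊓ dm b := inf_sup_left _ _ _
    _ ≤ dm b := sup_le (hkab.trans inf_le_right) inf_le_right

theorem le_dm_pc (a : L) : a ≤ dm (pc a) :=
  hk.le_dm_of_inf_eq_bot (inf_pc_eq_bot a)

theorem pc_le_dm (a : L) : pc a ≤ dm a :=
  hk.le_dm_of_inf_eq_bot (by rw [inf_comm, inf_pc_eq_bot])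

theorem subsingleton_fixedPoints_dm : (Function.fixedPoints (dm : L → L)).Subsingleton := by
  intro x (hx : dm x = x) y (hy : dm y = y)
  exact le_antisymm (by simpa only [hx, hy, inf_idem, sup_idem] using hk x y)
    (by simpa only [hx, hy, inf_idem, sup_idem] using hk y x)

end Kleene

theorem C_eq_of_le_dm (h : x ≤ dm x) : C x = x ⊔ pc x := by
  rw [C, inf_eq_left.2 h]

theorem T_eq_of_le_dm (hk : Kleene L) (hw : w ≤ dm w) : T w = w ⊔ pc w ⊓ dm (pc w) := by
  have h₁ : w ≤ dm w ⊓ dm (pc w) := le_inf hw (hk.le_dm_pc w)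
  have h₂ : pc w ⊓ (dm w ⊓ dm (pc w)) = pc w ⊓ dm (pc w) := by
    rw [← inf_assoc, inf_eq_left.2 (hk.pc_le_dm w)]
  rw [T, C_eq_of_le_dm hw, dm_sup, inf_sup_right, inf_eq_left.2 h₁, h₂]

theorem pc_T_eq_of_le_dm (hk : Kleene L) (hw : w ≤ dm w) :
    pc (T w) = pc w ⊓ pc (pc w ⊓ dm (pc w)) := by
  rw [T_eq_of_le_dm hk hw, pc_sup]

theorem Kleene.inf_pc_inf_dm_eq_bot (hk : Kleene L) (hp : p ≤ C p) :
    p ⊓ pc (p ⊓ dm p) ⊓ dm (p ⊓ pc (p ⊓ dm p)) = ⊥ := by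
  set n := p ⊓ dm p
  have key : pc n ⊓ dm (pc n) ≤ dm p := le_dm_comm.1 <| by
    rw [dm_inf, dm_dm]
    exact hp.trans (sup_le_sup_right (hk.le_dm_pc n) _)
  refine le_bot_iff.1 (le_trans ?_ (inf_pc_eq_bot n).le)
  rw [dm_inf, inf_sup_left]
  refine sup_le (le_inf (le_inf (inf_le_left.trans inf_le_left) inf_le_right)
    (inf_le_left.trans inf_le_right)) (le_inf (le_inf (inf_le_left.trans inf_le_left) ?_)
    (inf_le_left.trans inf_le_right))
  exact (le_inf (inf_le_left.trans inf_le_right) inf_le_right).trans key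

theorem isCongruence_ker {M : Type*} [Lattice M] (g : L → M)
    (map_inf : ∀ a b, g (a ⊓ b) = g a ⊓ g b) (map_sup : ∀ a b, g (a ⊔ b) = g a ⊔ g b)
    (map_dm : ∀ a b, g a = g b → g (dm a) = g (dm b))
    (map_pc : ∀ a b, g a = g b → g (pc a) = g (pc b)) :
    IsCongruence fun a b => g a = g b :=
  ⟨⟨fun _ => rfl, Eq.symm, Eq.trans⟩, fun a b c d hab hcd => by simp only [map_inf, hab, hcd],
    fun a b c d hab hcd => by simp only [map_sup, hab, hcd], map_dm, map_pc⟩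

theorem isCongruence_inf_right (hc : c ⊓ dm c = ⊥) :
    IsCongruence fun a b : L => a ⊓ c = b ⊓ c := by
  have dm_inf_right : ∀ a : L, dm a ⊓ c = dm (a ⊓ c) ⊓ c := fun a => by
    rw [dm_inf, inf_sup_right, inf_comm (dm c), hc, sup_bot_eq]
  refine isCongruence_ker (· ⊓ c) (fun a b => inf_inf_distrib_right a b c)
    (fun a b => inf_sup_right a b c) (fun a b h => ?_) (fun a b h => ?_)
  · simp only [dm_inf_right a, dm_inf_right b, h]
  · simp only [pc_inf_eq_pc_inf_inf a, pc_inf_eq_pc_inf_inf b, h]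

def theta (f a : L) : L × L := (a ⊓ f, a ⊔ dm f)

theorem theta_inf (f a b : L) : theta f (a ⊓ b) = theta f a ⊓ theta f b :=
  Prod.ext (inf_inf_distrib_right a b f) (sup_inf_right a b (dm f))

theorem theta_sup (f a b : L) : theta f (a ⊔ b) = theta f a ⊔ theta f b :=
  Prod.ext (inf_sup_right a b f) (sup_sup_distrib_right a b (dm f))

theorem theta_dm_eq (h : theta f a = theta f b) : theta f (dm a) = theta f (dm b) := by
  have h₁ : a ⊓ f = b ⊓ f := congrArg Prod.fst h
  have h₂ : a ⊔ dm f = b ⊔ dm f := congrArg Prod.snd h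
  have e : ∀ a : L, theta f (dm a) = (dm (a ⊔ dm f), dm (a ⊓ f)) := fun a => by
    rw [dm_sup, dm_inf, dm_dm]; rfl
  rw [e, e, h₁, h₂]

theorem pc_eq_pc_of_theta_eq (hf : pc f = ⊥) (h : theta f a = theta f b) : pc a = pc b :=
  pc_eq_pc_of_inf_eq hf (congrArg Prod.fst h)

theorem theta_dm_self (f : L) : theta f (dm f) = theta f (f ⊓ dm f) :=
  Prod.ext (show dm f ⊓ f = f ⊓ dm f ⊓ f by rw [inf_comm (dm f), inf_right_comm, inf_idem])
    (show dm f ⊔ dm f = f ⊓ dm f ⊔ dm f by rw [sup_idem, sup_comm, inf_comm, sup_inf_self])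

theorem isCongruence_theta (hf : pc f = ⊥) : IsCongruence fun a b => theta f a = theta f b :=
  isCongruence_ker (theta f) (theta_inf f) (theta_sup f) (fun _ _ => theta_dm_eq)
    (fun _ _ h => by rw [pc_eq_pc_of_theta_eq hf h])

/-- The second component `a ↦ (a ∨ x) ∧ x'` alone does not respect `*`; the first one does,
since its kernel identifies `a` and `b` only when `a ∧ d = b ∧ d` with `d` dense. -/
theorem isCongruence_theta_prod (hd : pc d = ⊥) (hx : x ≤ dm x) :
    IsCongruence fun a b => (theta d a, (a ⊔ x) ⊓ dm x) = (theta d b, (b ⊔ x) ⊓ dm x) := by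
  have dm_sup_inf : ∀ a : L, (dm a ⊔ x) ⊓ dm x = dm ((a ⊔ x) ⊓ dm x) := fun a => by
    rw [dm_inf, dm_sup, dm_dm, sup_inf_right, sup_eq_left.2 hx]
  refine isCongruence_ker _ (fun a b => Prod.ext (theta_inf d a b) ?_)
    (fun a b => Prod.ext (theta_sup d a b) ?_) (fun a b h => Prod.ext ?_ ?_) (fun a b h => ?_)
  · show (a ⊓ b ⊔ x) ⊓ dm x = (a ⊔ x) ⊓ dm x ⊓ ((b ⊔ x) ⊓ dm x)
    rw [sup_inf_right, inf_inf_distrib_right]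
  · show (a ⊔ b ⊔ x) ⊓ dm x = (a ⊔ x) ⊓ dm x ⊔ (b ⊔ x) ⊓ dm x
    rw [← inf_sup_right, sup_sup_distrib_right]
  · exact theta_dm_eq (congrArg Prod.fst h)
  · show (dm a ⊔ x) ⊓ dm x = (dm b ⊔ x) ⊓ dm x
    rw [dm_sup_inf, dm_sup_inf, (Prod.mk.inj h).2]
  · rw [pc_eq_pc_of_theta_eq hd (congrArg Prod.fst h)]

theorem SubdirectlyIrreducible.eq_or_eq (hsi : SubdirectlyIrreducible L) {α β : L → L → Prop}
    (hα : IsCongruence α) (hβ : IsCongruence β) (hαβ : ∀ a b, α a b → β a b → a = b)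
    {a₁ b₁ a₂ b₂ : L} (h₁ : α a₁ b₁) (h₂ : β a₂ b₂) : a₁ = b₁ ∨ a₂ = b₂ := by
  obtain ⟨μ, hμ, hμne, hmin⟩ := hsi
  by_contra! hne
  obtain ⟨p, q, hpq, hpq'⟩ : ∃ p q, μ p q ∧ p ≠ q := by
    by_contra! hμeq
    exact hμne (funext₂ fun p q => propext ⟨hμeq p q, fun h => h ▸ hμ.1.refl p⟩)
  have hαne : α ≠ (fun a b => a = b) := by rintro rfl; exact hne.1 h₁
  have hβne : β ≠ (fun a b => a = b) := by rintro rfl; exact hne.2 h₂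
  exact hpq' (hαβ p q (hmin α hα hαne p q hpq) (hmin β hβ hβne p q hpq))

theorem SubdirectlyIrreducible.eq_bot_or_eq_top_of_inf_dm_eq_bot (hsi : SubdirectlyIrreducible L)
    (hc : c ⊓ dm c = ⊥) : c = ⊥ ∨ c = ⊤ := by
  have hc' : dm c ⊓ dm (dm c) = ⊥ := by rw [dm_dm, inf_comm, hc]
  have hsup : c ⊔ dm c = ⊤ := by rw [← dm_dm (c ⊔ dm c), dm_sup, dm_dm, inf_comm, hc, dm_bot]
  have disj : ∀ a b : L, a ⊓ c = b ⊓ c → a ⊓ dm c = b ⊓ dm c → a = b := fun a b h₁ h₂ =>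
    calc a = a ⊓ c ⊔ a ⊓ dm c := by rw [← inf_sup_left, hsup, inf_top_eq]
      _ = b := by rw [h₁, h₂, ← inf_sup_left, hsup, inf_top_eq]
  rcases hsi.eq_or_eq (isCongruence_inf_right hc) (isCongruence_inf_right hc') disj
    (show ⊥ ⊓ c = dm c ⊓ c by rw [bot_inf_eq, inf_comm, hc])
    (show ⊥ ⊓ dm c = c ⊓ dm c by rw [bot_inf_eq, hc]) with h | h
  · exact Or.inr (by rw [← dm_dm c, ← h, dm_bot])
  · exact Or.inl h.symm

section Identity

variable (hk : Kleene L) (hsi : SubdirectlyIrreducible L)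
  (hid : ∀ a b : L, pc a ≤ C b ⊔ pc (T a))
include hk hid

theorem pc_le_C_pc (hw : w ≤ dm w) : pc w ≤ C (pc w) := by
  refine (hid w (pc w)).trans (sup_le le_rfl ?_)
  rw [pc_T_eq_of_le_dm hk hw]
  exact inf_le_right.trans le_sup_right

include hsi

theorem pc_T_eq_bot (hw : w ≤ dm w) (hw₀ : w ≠ ⊥) : pc (T w) = ⊥ := by
  have hr := hsi.eq_bot_or_eq_top_of_inf_dm_eq_bot
    (hk.inf_pc_inf_dm_eq_bot (pc_le_C_pc hk hid hw))
  rw [← pc_T_eq_of_le_dm hk hw] at hr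
  refine hr.resolve_right fun htop => hw₀ ?_
  have hT := eq_bot_of_pc_eq_top htop
  rw [T_eq_of_le_dm hk hw] at hT
  exact (sup_eq_bot_iff.1 hT).1

theorem pc_le_dm_pc (hw : w ≤ dm w) (hw₀ : w ≠ ⊥) : pc w ≤ dm (pc w) := by
  have h : pc w ⊓ pc (pc w ⊓ dm (pc w)) = ⊥ := by
    rw [← pc_T_eq_of_le_dm hk hw, pc_T_eq_bot hk hsi hid hw hw₀]
  calc pc w = pc w ⊓ C (pc w) := (inf_eq_left.2 (pc_le_C_pc hk hid hw)).symm
    _ = pc w ⊓ (pc w ⊓ dm (pc w)) := by rw [C, inf_sup_left, h, sup_bot_eq]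
    _ ≤ dm (pc w) := inf_le_right.trans inf_le_right

theorem sup_pc_le_dm_sup_pc (hw : w ≤ dm w) (hw₀ : w ≠ ⊥) : w ⊔ pc w ≤ dm (w ⊔ pc w) := by
  rw [dm_sup]
  exact sup_le (le_inf hw (hk.le_dm_pc w))
    (le_inf (hk.pc_le_dm w) (pc_le_dm_pc hk hsi hid hw hw₀))

/-- For `w = d ∧ d' ≠ 0`, the dense element `w ∨ w*` lies below its own `'`, so `d` lies
below both. -/
theorem le_dm_or_eq_top (hd : d ∈ lowerBounds {e : L | pc e = ⊥}) : d ≤ dm d ∨ d = ⊤ := by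
  by_cases hw₀ : d ⊓ dm d = ⊥
  · rcases hsi.eq_bot_or_eq_top_of_inf_dm_eq_bot hw₀ with h | h
    · exact Or.inl (by rw [h]; exact bot_le)
    · exact Or.inr h
  set w := d ⊓ dm d
  have hw : w ≤ dm w := by
    rw [dm_inf, dm_dm]
    exact inf_le_left.trans le_sup_right
  have hdense : pc (w ⊔ pc w) = ⊥ := pc_sup_pc_eq_bot w
  have hdense' := pc_eq_bot_of_le hdense (sup_pc_le_dm_sup_pc hk hsi hid hw hw₀)
  exact Or.inl ((hd hdense).trans (le_dm_comm.1 (hd hdense')))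

theorem pc_le_of_le_of_ne_bot (hd : pc d = ⊥) (hdd : d ≤ dm d) (hwd : w ≤ d) (hw₀ : w ≠ ⊥) :
    pc w ≤ d := by
  have hw : w ≤ dm w := hwd.trans (hdd.trans (dm_le_dm hwd))
  have h := hid w d
  rwa [pc_T_eq_bot hk hsi hid hw hw₀, sup_bot_eq, C_eq_of_le_dm hdd, hd, sup_bot_eq] at h

theorem le_of_pc_ne_bot (hd : pc d = ⊥) (hdd : d ≤ dm d) (ha : pc a ≠ ⊥) : a ≤ d :=
  calc a ≤ pc (pc a) := le_pc_pc a
    _ = pc (pc a ⊓ d) := (pc_inf_of_pc_eq_bot hd _).symm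
    _ ≤ d := pc_le_of_le_of_ne_bot hk hsi hid hd hdd inf_le_right
        fun h => ha (eq_bot_of_inf_eq_bot_of_pc_eq_bot hd h)

theorem le_or_mem_Icc_or_dm_le (hd : IsLeast {e : L | pc e = ⊥} d) (a : L) :
    a ≤ d ∨ a ∈ Set.Icc d (dm d) ∨ dm d ≤ a := by
  rcases le_dm_or_eq_top hk hsi hid hd.2 with hdd | htop
  · by_cases ha : pc a = ⊥
    · by_cases ha' : pc (dm a) = ⊥
      · exact Or.inr (Or.inl ⟨hd.2 ha, le_dm_comm.1 (hd.2 ha')⟩)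
      · exact Or.inr (Or.inr (dm_le_comm.1 (le_of_pc_ne_bot hk hsi hid hd.1 hdd ha')))
    · exact Or.inl (le_of_pc_ne_bot hk hsi hid hd.1 hdd ha)
  · exact Or.inl (htop ▸ le_top)

end Identity

theorem SubdirectlyIrreducible.le_dm_or_dm_le (hsi : SubdirectlyIrreducible L) (hx : pc x = ⊥)
    (hx' : pc (dm x) = ⊥) : x ≤ dm x ∨ dm x ≤ x := by
  have disj : ∀ a b, theta x a = theta x b → theta (dm x) a = theta (dm x) b → a = b :=
    fun a b h h' => eq_of_inf_eq_sup_eq (congrArg Prod.fst h)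
      (by simpa only [theta, dm_dm] using congrArg Prod.snd h')
  rcases hsi.eq_or_eq (isCongruence_theta hx) (isCongruence_theta hx') disj (theta_dm_self x)
    (theta_dm_self (dm x)) with h | h
  · exact Or.inr (inf_eq_right.1 h.symm)
  · rw [dm_dm] at h
    exact Or.inl (inf_eq_right.1 h.symm)

theorem SubdirectlyIrreducible.eq_or_eq_dm_of_mem_Icc (hsi : SubdirectlyIrreducible L)
    (hd : pc d = ⊥) (hx : x ∈ Set.Icc d (dm d)) (hxx : x ≤ dm x) : x = d ∨ x = dm x := by
  have hθ : theta x (dm x) = theta x x := by rw [theta_dm_self, inf_eq_left.2 hxx]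
  have hρ : (theta d d, (d ⊔ x) ⊓ dm x) = (theta d x, (x ⊔ x) ⊓ dm x) := by
    rw [sup_eq_right.2 hx.1, sup_idem]
    congr 1
    exact Prod.ext (show d ⊓ d = x ⊓ d by rw [inf_idem, inf_eq_right.2 hx.1])
      (show d ⊔ dm d = x ⊔ dm d by
        rw [sup_eq_right.2 (hx.1.trans hx.2), sup_eq_right.2 hx.2])
  have disj : ∀ a b, theta x a = theta x b →
      (theta d a, (a ⊔ x) ⊓ dm x) = (theta d b, (b ⊔ x) ⊓ dm x) → a = b := fun a b h h' =>
    eq_of_inf_eq_of_sup_eq_of_sup_inf_eq hxx (congrArg Prod.fst h) (congrArg Prod.snd h)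
      (Prod.mk.inj h').2
  rcases hsi.eq_or_eq (isCongruence_theta (pc_eq_bot_of_le hd hx.1))
    (isCongruence_theta_prod hd hxx) disj hθ hρ with h | h
  exacts [Or.inr h.symm, Or.inl h.symm]

theorem SubdirectlyIrreducible.Icc_subset_pair_union_fixedPoints
    (hsi : SubdirectlyIrreducible L) (hd : pc d = ⊥) :
    Set.Icc d (dm d) ⊆ {d, dm d} ∪ Function.fixedPoints dm := by
  intro x hx
  have hx' : dm x ∈ Set.Icc d (dm d) := ⟨le_dm_comm.1 hx.2, dm_le_dm hx.1⟩
  rcases hsi.le_dm_or_dm_le (pc_eq_bot_of_le hd hx.1) (pc_eq_bot_of_le hd hx'.1) with h | h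
  · rcases hsi.eq_or_eq_dm_of_mem_Icc hd hx h with h | h
    · exact Or.inl (Or.inl h)
    · exact Or.inr h.symm
  · rcases hsi.eq_or_eq_dm_of_mem_Icc hd hx' (by rwa [dm_dm]) with h | h
    · exact Or.inl (Or.inr (show x = dm d by rw [← h, dm_dm]))
    · rw [dm_dm] at h
      exact Or.inr h

theorem encard_Icc_le_three (hk : Kleene L) (hsi : SubdirectlyIrreducible L) (hd : pc d = ⊥) :
    (Set.Icc d (dm d)).encard ≤ 3 :=
  calc (Set.Icc d (dm d)).encard
      ≤ ({d, dm d} : Set L).encard + (Function.fixedPoints dm).encard :=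
        (Set.encard_le_encard (hsi.Icc_subset_pair_union_fixedPoints hd)).trans
          (Set.encard_union_le _ _)
    _ ≤ 2 + 1 := by
        gcongr
        · exact (Set.encard_insert_le _ _).trans (by rw [Set.encard_singleton]; rfl)
        · exact Set.encard_le_one_iff_subsingleton.2 hk.subsingleton_fixedPoints_dm
    _ = 3 := rfl

theorem isChain_Icc (hk : Kleene L) (hsi : SubdirectlyIrreducible L) (hd : pc d = ⊥) :
    IsChain (· ≤ ·) (Set.Icc d (dm d)) := by
  intro a ha b hb _
  rcases hsi.Icc_subset_pair_union_fixedPoints hd ha with (rfl | rfl) | ha'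
  · exact Or.inl hb.1
  · exact Or.inr hb.2
  · rcases hsi.Icc_subset_pair_union_fixedPoints hd hb with (rfl | rfl) | hb'
    · exact Or.inr ha.1
    · exact Or.inl ha.2
    · exact Or.inl (hk.subsingleton_fixedPoints_dm ha' hb').le

end PMAlgebra

/-- A subdirectly irreducible pk-algebra satisfying `a* ≤ C(b) ∨ T(a)*` with
least dense element `d` is, as a lattice, the ordinal sum `B ⊕ Cᵢ ⊕ B` of a
Boolean lattice, a chain with at most three elements, and a Boolean lattice. -/
theorem ordinal_sum_structure {L : Type*} [PMAlgebra L]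
    (hk : Kleene L) (hsi : SubdirectlyIrreducible L)
    (hid : ∀ a b : L, pc a ≤ C b ⊔ pc (T a))
    (d : L) (hd : pc d = ⊥) (hleast : ∀ e : L, pc e = ⊥ → d ≤ e) :
    (∀ a : L, a ≤ d → ∃ b : L, b ≤ d ∧ a ⊓ b = ⊥ ∧ a ⊔ b = d) ∧
    (Set.BijOn dm {a : L | a ≤ d} {a : L | dm d ≤ a} ∧
      ∀ a b : L, a ≤ d → b ≤ d → (a ≤ b ↔ dm b ≤ dm a)) ∧
    ({a : L | d ≤ a ∧ a ≤ dm d}.encard ≤ 3 ∧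
      ∀ a b : L, d ≤ a → a ≤ dm d → d ≤ b → b ≤ dm d → a ≤ b ∨ b ≤ a) ∧
    (∀ a : L, a ≤ d ∨ (d ≤ a ∧ a ≤ dm d) ∨ dm d ≤ a) :=
  ⟨fun _ => exists_inf_eq_bot_sup_eq_of_le hleast,
    ⟨bijOn_dm_Iic_Ici d, fun _ _ _ _ => dm_le_dm_iff.symm⟩,
    ⟨encard_Icc_le_three hk hsi hd, fun _ _ ha₁ ha₂ hb₁ hb₂ =>
      (isChain_Icc hk hsi hd).total ⟨ha₁, ha₂⟩ ⟨hb₁, hb₂⟩⟩,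
    le_or_mem_Icc_or_dm_le hk hsi hid ⟨hd, hleast⟩⟩
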